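/- arXiv:1604.05230 — 2 statements merged into one kernel-verified Lean document; each statement's English description precedes it below -/
import Mathlib

section
/- Let a ∈ ℝⁿ with a ≠ 0 and define f(x) = -a/|a| + 2|a|(x + a)/|x + a|² for x ≠ -a. Then for every x in the hyperplane L(a,0) = {x ∈ ℝⁿ : ⟨x, a⟩ = 0}, one has |f(x)| = 1; that is, f maps the hyperplane L(a,0) into the unit sphere S(0,1). -/
/-!
For `x ⊥ a` put `y = x + a`, so that `⟪y, a⟫ = ‖a‖²`. Expanding
`‖-a/‖a‖ + (2‖a‖/‖y‖²) y‖²`, the first term contributes `1`, the cross term `-4‖a‖²/‖y‖²`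
and the last term `4‖a‖²/‖y‖²`, so the sum is `1`.
-/

open RealInnerProductSpace

variable {E : Type*} [NormedAddCommGroup E] [InnerProductSpace ℝ E]

theorem norm_neg_inv_norm_smul_add_smul_eq_one {a y : E} (ha : a ≠ 0)
    (hy : ⟪y, a⟫ = ‖a‖ ^ 2) : ‖-(‖a‖⁻¹ • a) + (2 * ‖a‖ / ‖y‖ ^ 2) • y‖ = 1 := by
  have hna : ‖a‖ ≠ 0 := norm_ne_zero_iff.mpr ha
  have hny : ‖y‖ ≠ 0 := by
    intro h
    rw [norm_eq_zero.mp h, inner_zero_left] at hy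
    exact hna (pow_eq_zero_iff two_ne_zero |>.mp hy.symm)
  refine (pow_eq_one_iff_of_nonneg (norm_nonneg _) two_ne_zero).mp ?_
  rw [norm_add_sq_real, norm_neg, inner_neg_left, real_inner_smul_left, real_inner_smul_right,
    real_inner_comm, hy, norm_smul, norm_smul, norm_inv, norm_norm,
    Real.norm_of_nonneg (by positivity)]
  field_simp
  ring

theorem ne_neg_of_inner_eq_zero {a x : E} (ha : a ≠ 0) (hx : ⟪x, a⟫ = 0) : x ≠ -a := by
  rintro rfl
  rw [inner_neg_left, real_inner_self_eq_norm_sq, neg_eq_zero] at hx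
  exact ha (by simpa using hx)

theorem mobius_maps_hyperplane_to_sphere_general (n : ℕ)
    (a : EuclideanSpace ℝ (Fin n)) (ha : a ≠ 0)
    (f : EuclideanSpace ℝ (Fin n) → EuclideanSpace ℝ (Fin n))
    (hf : ∀ x, x ≠ -a → f x = -(‖a‖⁻¹ • a) + (2 * ‖a‖ / ‖x + a‖ ^ 2) • (x + a)) :
    ∀ x : EuclideanSpace ℝ (Fin n), ⟪x, a⟫ = 0 → ‖f x‖ = 1 := by
  intro x hx
  have hxa : ⟪x + a, a⟫ = ‖a‖ ^ 2 := by
    rw [inner_add_left, hx, zero_add, real_inner_self_eq_norm_sq]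
  rw [hf x (ne_neg_of_inner_eq_zero ha hx)]
  exact norm_neg_inv_norm_smul_add_smul_eq_one ha hxa

/-- The Möbius map `f(x) = -a/|a| + 2|a|(x+a)/|x+a|²` sends the hyperplane
`L(a,0) = {x : ⟪x,a⟫ = 0}` into the unit sphere `S(0,1)`. -/
theorem mobius_maps_hyperplane_to_sphere (n : ℕ) (hn : 2 ≤ n)
    (a : EuclideanSpace ℝ (Fin n)) (ha : a ≠ 0)
    (f : EuclideanSpace ℝ (Fin n) → EuclideanSpace ℝ (Fin n))
    (hf : ∀ x, x ≠ -a → f x = -(‖a‖⁻¹ • a) + (2 * ‖a‖ / ‖x + a‖ ^ 2) • (x + a)) :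
    ∀ x : EuclideanSpace ℝ (Fin n), ⟪x, a⟫ = 0 → ‖f x‖ = 1 :=
  mobius_maps_hyperplane_to_sphere_general n a ha f hf
end

section
/- Let c ∈ ℝⁿ with 0 < |c| < 1, and set b = ((1 + √(1 - |c|²))/|c|²) c and ρ² = |b|² - 1. Then the inversion f₂(y) = b + ρ²(y - b)/|y - b|² satisfies f₂(0) = -f₂(c), i.e., it maps the points 0 and c to a pair of points symmetric with respect to the origin. -/
/-!
Write `b = t • c` and `k = ‖c‖²`, so that `t = (1 + √(1 - k)) / k` is a root of
`k t² - 2 t + 1 = 0`. Both images are multiples of `c`: `f₂ 0 = b / ‖b‖²` is the point inverse to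
`b` in the unit sphere, and `f₂ c = (t + (t² k - 1) / ((1 - t) k)) • c`. Clearing denominators,
`f₂ 0 + f₂ c = 0` becomes exactly `k t² - 2 t + 1 = 0`.
-/

namespace Real

theorem quadratic_eq_zero_of_eq_one_add_sqrt_div {k t : ℝ} (hk : 0 < k) (hk1 : k ≤ 1)
    (ht : t = (1 + √(1 - k)) / k) : k * t ^ 2 - 2 * t + 1 = 0 := by
  have hs : √(1 - k) ^ 2 = 1 - k := sq_sqrt (by linarith)
  subst ht
  field_simp
  linear_combination hs

theorem one_lt_one_add_sqrt_div {k : ℝ} (hk : 0 < k) (hk1 : k < 1) : 1 < (1 + √(1 - k)) / k := by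
  rw [lt_div_iff₀ hk]
  linarith [sqrt_nonneg (1 - k)]

end Real

section Inversion

variable {E : Type*} [NormedAddCommGroup E] [NormedSpace ℝ E]

noncomputable def unitSphereOrthogonalInversion (b y : E) : E :=
  b + ((‖b‖ ^ 2 - 1) / ‖y - b‖ ^ 2) • (y - b)

theorem unitSphereOrthogonalInversion_zero_eq_neg {c : E} {t : ℝ} (hc : c ≠ 0) (ht1 : t ≠ 1)
    (ht : ‖c‖ ^ 2 * t ^ 2 - 2 * t + 1 = 0) :
    unitSphereOrthogonalInversion (t • c) 0 = -unitSphereOrthogonalInversion (t • c) c := by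
  unfold unitSphereOrthogonalInversion
  have hk : ‖c‖ ≠ 0 := norm_ne_zero_iff.mpr hc
  have ht0 : t ≠ 0 := by rintro rfl; norm_num at ht
  have h1t : 1 - t ≠ 0 := sub_ne_zero.mpr (Ne.symm ht1)
  have hsub : c - t • c = (1 - t) • c := by rw [sub_smul, one_smul]
  rw [zero_sub, norm_neg, hsub, norm_smul, norm_smul, Real.norm_eq_abs, Real.norm_eq_abs,
    mul_pow, mul_pow, sq_abs, sq_abs]
  match_scalars
  field_simp
  linear_combination ht

end Inversion

theorem inversion_f2_symmetric_general (n : ℕ)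
    (c : EuclideanSpace ℝ (Fin n)) (hc : c ≠ 0) (hc' : ‖c‖ < 1)
    (b : EuclideanSpace ℝ (Fin n))
    (hb : b = ((1 + Real.sqrt (1 - ‖c‖ ^ 2)) / ‖c‖ ^ 2) • c)
    (ρ2 : ℝ) (hρ2 : ρ2 = ‖b‖ ^ 2 - 1)
    (f₂ : EuclideanSpace ℝ (Fin n) → EuclideanSpace ℝ (Fin n))
    (hf₂ : ∀ y, y ≠ b → f₂ y = b + (ρ2 / ‖y - b‖ ^ 2) • (y - b)) :
    f₂ 0 = -f₂ c := by
  set t := (1 + Real.sqrt (1 - ‖c‖ ^ 2)) / ‖c‖ ^ 2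
  have hk : 0 < ‖c‖ ^ 2 := by positivity
  have hk1 : ‖c‖ ^ 2 < 1 := pow_lt_one₀ (norm_nonneg c) hc' two_ne_zero
  have ht1 : 1 < t := Real.one_lt_one_add_sqrt_div hk hk1
  have hb0 : (0 : EuclideanSpace ℝ (Fin n)) ≠ b := by
    rw [hb]
    exact (smul_ne_zero (by positivity) hc).symm
  have hcb : c ≠ b := by
    rw [← sub_ne_zero, hb, show c - t • c = (1 - t) • c by rw [sub_smul, one_smul]]
    exact smul_ne_zero (by linarith) hc
  rw [hf₂ 0 hb0, hf₂ c hcb, hρ2, hb]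
  exact unitSphereOrthogonalInversion_zero_eq_neg hc ht1.ne'
    (Real.quadratic_eq_zero_of_eq_one_add_sqrt_div hk hk1.le rfl)

/-- The inversion `f₂(y) = b + ρ²(y-b)/|y-b|²` with
`b = ((1 + √(1-|c|²))/|c|²) c`, `ρ² = |b|² - 1`, maps `0` and `c` to a pair of
points symmetric with respect to the origin. -/
theorem inversion_f2_symmetric (n : ℕ) (hn : 2 ≤ n)
    (c : EuclideanSpace ℝ (Fin n)) (hc : c ≠ 0) (hc' : ‖c‖ < 1)
    (b : EuclideanSpace ℝ (Fin n))
    (hb : b = ((1 + Real.sqrt (1 - ‖c‖ ^ 2)) / ‖c‖ ^ 2) • c)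
    (ρ2 : ℝ) (hρ2 : ρ2 = ‖b‖ ^ 2 - 1)
    (f₂ : EuclideanSpace ℝ (Fin n) → EuclideanSpace ℝ (Fin n))
    (hf₂ : ∀ y, y ≠ b → f₂ y = b + (ρ2 / ‖y - b‖ ^ 2) • (y - b)) :
    f₂ 0 = -f₂ c :=
  inversion_f2_symmetric_general n c hc hc' b hb ρ2 hρ2 f₂ hf₂
end
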